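/- arXiv:2204.03298 — 3 statements merged into one kernel-verified Lean document; each statement's English description precedes it below -/
import Mathlib

section
/- Let ⟪-,-⟫ be a double bracket on A associated with a swap-commuting A-bimodule structure on A⊗A, and assume there exists an A-bimodule structure ·₃ on A⊗A⊗A such that the double Jacobiator satisfies ⟪a,b,c₁c₂⟫ = c₁ ·₃ ⟪a,b,c₂⟫ + ⟪a,b,c₁⟫ ·₃ c₂ for all a,b,c₁,c₂ ∈ A. Then the double Jacobiator is also a derivation in its first and second arguments (with respect to the bimodule structures ·ᵢ := τ_{(132)} ∘ ·_{i+1} ∘ (id_A × τ_{(123)} × id_A) on A⊗A⊗A for i = 1,2), and for any generating set S of A as a k-algebra, ⟪-,-⟫ is a double Poisson bracket if and only if ⟪s,t,u⟫ = 0 for all s,t,u ∈ S. -/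
open scoped TensorProduct

noncomputable section

/-- A (`k`-linear) `A`-bimodule-type structure on a `k`-module `M`,
given by a three-slot action `a · d · b`. -/
structure BimodOn (k A M : Type*) [CommSemiring k] [Ring A] [Algebra k A]
    [AddCommMonoid M] [Module k M] where
  act : A → M → A → M
  add_left : ∀ (a a' : A) (d : M) (b : A), act (a + a') d b = act a d b + act a' d b
  add_mid : ∀ (a : A) (d d' : M) (b : A), act a (d + d') b = act a d b + act a d' b
  add_right : ∀ (a : A) (d : M) (b b' : A), act a d (b + b') = act a d b + act a d b'
  smul_left : ∀ (c : k) (a : A) (d : M) (b : A), act (c • a) d b = c • act a d b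
  smul_mid : ∀ (c : k) (a : A) (d : M) (b : A), act a (c • d) b = c • act a d b
  smul_right : ∀ (c : k) (a : A) (d : M) (b : A), act a d (c • b) = c • act a d b
  act_one_one : ∀ d : M, act 1 d 1 = d
  act_mul : ∀ (a a' : A) (d : M) (b b' : A), act a (act a' d b') b = act (a * a') d (b' * b)

/-- An `A`-bimodule structure on `A ⊗[k] A`. -/
abbrev BimodStr (k A : Type*) [CommSemiring k] [Ring A] [Algebra k A] :=
  BimodOn k A (A ⊗[k] A)

section Defs

variable (k A : Type*) [CommSemiring k] [Ring A] [Algebra k A]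

/-- The swap automorphism `°` of `A ⊗[k] A`, `a ⊗ b ↦ b ⊗ a`. -/
def swapT : A ⊗[k] A →ₗ[k] A ⊗[k] A := (TensorProduct.comm k A A).toLinearMap

variable {k A}

namespace BimodOn

/-- The swap bimodule structure `a * d * b = (a · d° · b)°` associated with a
bimodule structure on `A ⊗[k] A`. -/
def star (S : BimodStr k A) (a : A) (d : A ⊗[k] A) (b : A) : A ⊗[k] A :=
  swapT k A (S.act a (swapT k A d) b)

/-- A bimodule structure on `A ⊗[k] A` is swap-commuting if it commutes with its
swap bimodule structure. -/
def SwapCommuting (S : BimodStr k A) : Prop :=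
  ∀ (a₁ a₂ b₁ b₂ : A) (d : A ⊗[k] A),
    S.act a₁ (S.star a₂ d b₂) b₁ = S.star a₂ (S.act a₁ d b₁) b₂

end BimodOn

end Defs

/-- A double bracket on `A` associated with a bimodule structure `S` on `A ⊗[k] A`
(with swap bimodule structure `S.star`). -/
structure DoubleBracket {k A : Type*} [CommSemiring k] [Ring A] [Algebra k A]
    (S : BimodStr k A) where
  br : A →ₗ[k] A →ₗ[k] A ⊗[k] A
  antisymm : ∀ a b : A, br a b = - swapT k A (br b a)
  leibniz_right : ∀ a b c : A, br a (b * c) = S.act b (br a c) 1 + S.act 1 (br a b) c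
  leibniz_left : ∀ a b c : A, br (b * c) a = S.star b (br c a) 1 + S.star 1 (br b a) c

section Taus

variable (k A : Type*) [CommSemiring k] [Ring A] [Algebra k A]

/-- `τ_{(123)}` on `A^{⊗3}`: `a ⊗ b ⊗ c ↦ c ⊗ a ⊗ b`. -/
def tau123 : (A ⊗[k] A) ⊗[k] A →ₗ[k] (A ⊗[k] A) ⊗[k] A :=
  ((TensorProduct.comm k (A ⊗[k] A) A).trans (TensorProduct.assoc k A A A).symm).toLinearMap

/-- `τ_{(132)}` on `A^{⊗3}`: `a ⊗ b ⊗ c ↦ b ⊗ c ⊗ a`. -/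
def tau132 : (A ⊗[k] A) ⊗[k] A →ₗ[k] (A ⊗[k] A) ⊗[k] A :=
  ((TensorProduct.assoc k A A A).trans (TensorProduct.comm k A (A ⊗[k] A))).toLinearMap

/-- `τ_{(12)}` on `A^{⊗3}`: `a ⊗ b ⊗ c ↦ b ⊗ a ⊗ c`. -/
def tau12 : (A ⊗[k] A) ⊗[k] A →ₗ[k] (A ⊗[k] A) ⊗[k] A :=
  (TensorProduct.congr (TensorProduct.comm k A A) (LinearEquiv.refl k A)).toLinearMap

variable {k A}

/-- `⟪a, -⟫_L : A ⊗ A → A ⊗ A ⊗ A`, `b₁ ⊗ b₂ ↦ ⟪a, b₁⟫ ⊗ b₂`. -/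
def trL (br : A →ₗ[k] A →ₗ[k] A ⊗[k] A) (a : A) :
    A ⊗[k] A →ₗ[k] (A ⊗[k] A) ⊗[k] A :=
  TensorProduct.map (br a) LinearMap.id

/-- The double Jacobiator of a bilinear operation `A × A → A ⊗ A`:
`⟪a,b,c⟫ = ⟪a,⟪b,c⟫⟫_L + τ_{(123)} ⟪b,⟪c,a⟫⟫_L + τ_{(132)} ⟪c,⟪a,b⟫⟫_L`. -/
def jac (br : A →ₗ[k] A →ₗ[k] A ⊗[k] A) (a b c : A) : (A ⊗[k] A) ⊗[k] A :=
  trL br a (br b c) + tau123 k A (trL br b (br c a)) + tau132 k A (trL br c (br a b))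

end Taus

end

section Aux

variable {k A : Type*} [CommSemiring k] [Ring A] [Algebra k A]

lemma tau123_tmul (a b c : A) :
    tau123 k A ((a ⊗ₜ[k] b) ⊗ₜ[k] c) = (c ⊗ₜ[k] a) ⊗ₜ[k] b := by
  simp [tau123]

lemma tau132_tmul (a b c : A) :
    tau132 k A ((a ⊗ₜ[k] b) ⊗ₜ[k] c) = (b ⊗ₜ[k] c) ⊗ₜ[k] a := by
  simp [tau132]

lemma t123_t132 (x : (A ⊗[k] A) ⊗[k] A) : tau123 k A (tau132 k A x) = x := by
  have h : (tau123 k A).comp (tau132 k A) = LinearMap.id :=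
    TensorProduct.ext_threefold fun a b c => by
      simp [tau123_tmul, tau132_tmul]
  simpa using LinearMap.congr_fun h x

lemma t132_t123 (x : (A ⊗[k] A) ⊗[k] A) : tau132 k A (tau123 k A x) = x := by
  have h : (tau132 k A).comp (tau123 k A) = LinearMap.id :=
    TensorProduct.ext_threefold fun a b c => by
      simp [tau123_tmul, tau132_tmul]
  simpa using LinearMap.congr_fun h x

lemma t123_t123 (x : (A ⊗[k] A) ⊗[k] A) : tau123 k A (tau123 k A x) = tau132 k A x := by
  have h : (tau123 k A).comp (tau123 k A) = tau132 k A :=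
    TensorProduct.ext_threefold fun a b c => by
      simp [tau123_tmul, tau132_tmul]
  simpa using LinearMap.congr_fun h x

lemma t132_t132 (x : (A ⊗[k] A) ⊗[k] A) : tau132 k A (tau132 k A x) = tau123 k A x := by
  have h : (tau132 k A).comp (tau132 k A) = tau123 k A :=
    TensorProduct.ext_threefold fun a b c => by
      simp [tau123_tmul, tau132_tmul]
  simpa using LinearMap.congr_fun h x

variable (br : A →ₗ[k] A →ₗ[k] A ⊗[k] A)

/-- Cyclic symmetry of the double Jacobiator (purely formal). -/
lemma jac_cyc (a b c : A) : jac br a b c = tau123 k A (jac br b c a) := by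
  simp only [jac, map_add, t123_t123, t123_t132]
  abel

lemma jac_cyc' (a b c : A) : jac br a b c = tau132 k A (jac br c a b) := by
  rw [jac_cyc br c a b, t132_t123]

lemma jac_add₃ (a b c c' : A) :
    jac br a b (c + c') = jac br a b c + jac br a b c' := by
  simp only [jac, trL, map_add, LinearMap.add_apply, TensorProduct.map_add_left]
  abel

lemma jac_smul₃ (r : k) (a b c : A) :
    jac br a b (r • c) = r • jac br a b c := by
  simp only [jac, trL, map_smul, LinearMap.smul_apply, TensorProduct.map_smul_left,
    smul_add]

lemma jac_add₁ (a a' b c : A) :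
    jac br (a + a') b c = jac br a b c + jac br a' b c := by
  rw [jac_cyc br (a + a') b c, jac_cyc br a b c, jac_cyc br a' b c, jac_add₃, map_add]

lemma jac_smul₁ (r : k) (a b c : A) :
    jac br (r • a) b c = r • jac br a b c := by
  rw [jac_cyc br (r • a) b c, jac_cyc br a b c, jac_smul₃, map_smul]

lemma jac_add₂ (a b b' c : A) :
    jac br a (b + b') c = jac br a b c + jac br a b' c := by
  rw [jac_cyc' br a (b + b') c, jac_cyc' br a b c, jac_cyc' br a b' c, jac_add₃, map_add]

lemma jac_smul₂ (r : k) (a b c : A) :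
    jac br a (r • b) c = r • jac br a b c := by
  rw [jac_cyc' br a (r • b) c, jac_cyc' br a b c, jac_smul₃, map_smul]

lemma BimodOn.act_zero {M : Type*} [AddCommMonoid M] [Module k M]
    (S3 : BimodOn k A M) (a b : A) : S3.act a 0 b = 0 := by
  have := S3.smul_mid 0 a 0 b
  simpa using this

end Aux

/-- Lemma `Jac`: if the double Jacobiator is a derivation in its third
argument for some `A`-bimodule structure `·₃` on `A^{⊗3}`, then it is a derivation in its
first and second arguments (for the bimodule structures
`·ᵢ = τ_{(132)} ∘ ·_{i+1} ∘ (id × τ_{(123)} × id)`, `i = 1, 2`), and the double bracket is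
Poisson iff the double Jacobiator vanishes on any three elements of a generating set. -/
theorem jacobiator_derivation_and_poisson_on_generators
    {k A : Type*} [Field k] [CharZero k] [Ring A] [Algebra k A]
    (S : BimodStr k A) (hS : S.SwapCommuting) (D : DoubleBracket S)
    (S3 : BimodOn k A ((A ⊗[k] A) ⊗[k] A))
    (hder3 : ∀ a b c₁ c₂ : A, jac D.br a b (c₁ * c₂)
      = S3.act c₁ (jac D.br a b c₂) 1 + S3.act 1 (jac D.br a b c₁) c₂)
    (Sgen : Set A) (hgen : Algebra.adjoin k Sgen = ⊤) :
    (∀ a b₁ b₂ c : A, jac D.br a (b₁ * b₂) c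
      = tau132 k A (S3.act b₁ (tau123 k A (jac D.br a b₂ c)) 1)
        + tau132 k A (S3.act 1 (tau123 k A (jac D.br a b₁ c)) b₂)) ∧
    (∀ a₁ a₂ b c : A, jac D.br (a₁ * a₂) b c
      = tau132 k A (tau132 k A (S3.act a₁ (tau123 k A (tau123 k A (jac D.br a₂ b c))) 1))
        + tau132 k A (tau132 k A (S3.act 1 (tau123 k A (tau123 k A (jac D.br a₁ b c))) a₂))) ∧
    ((∀ a b c : A, jac D.br a b c = 0) ↔
      ∀ s ∈ Sgen, ∀ t ∈ Sgen, ∀ u ∈ Sgen, jac D.br s t u = 0) := by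
  -- vanishing when the third argument is 1
  have hone₃ : ∀ a b : A, jac D.br a b 1 = 0 := by
    intro a b
    have h := hder3 a b 1 1
    rw [one_mul, S3.act_one_one] at h
    exact left_eq_add.mp h
  -- derivation in the second slot
  have der₂ : ∀ a b₁ b₂ c : A, jac D.br a (b₁ * b₂) c
      = tau132 k A (S3.act b₁ (tau123 k A (jac D.br a b₂ c)) 1)
        + tau132 k A (S3.act 1 (tau123 k A (jac D.br a b₁ c)) b₂) := by
    intro a b₁ b₂ c
    rw [jac_cyc' D.br a (b₁ * b₂) c, hder3 c a b₁ b₂, map_add,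
      jac_cyc D.br c a b₂, jac_cyc D.br c a b₁]
  -- derivation in the first slot
  have der₁ : ∀ a₁ a₂ b c : A, jac D.br (a₁ * a₂) b c
      = tau132 k A (tau132 k A (S3.act a₁ (tau123 k A (tau123 k A (jac D.br a₂ b c))) 1))
        + tau132 k A (tau132 k A (S3.act 1 (tau123 k A (tau123 k A (jac D.br a₁ b c))) a₂)) := by
    intro a₁ a₂ b c
    rw [jac_cyc D.br (a₁ * a₂) b c, hder3 b c a₁ a₂, map_add,
      jac_cyc' D.br b c a₂, jac_cyc' D.br b c a₁]
    simp only [t132_t132, t123_t123, t123_t132]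
  refine ⟨der₂, der₁, fun h s hs t ht u hu => h s t u, fun h => ?_⟩
  -- vanishing when the first / second argument is 1
  have hone₁ : ∀ b c : A, jac D.br 1 b c = 0 := by
    intro b c
    rw [jac_cyc D.br 1 b c, hone₃, map_zero]
  have hone₂ : ∀ a c : A, jac D.br a 1 c = 0 := by
    intro a c
    rw [jac_cyc' D.br a 1 c, hone₃, map_zero]
  have halg₃ : ∀ (a b : A) (r : k), jac D.br a b (algebraMap k A r) = 0 := by
    intro a b r
    rw [Algebra.algebraMap_eq_smul_one, jac_smul₃, hone₃, smul_zero]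
  -- Step 1: kill the third argument
  have step1 : ∀ a b c : A, jac D.br a b c = 0 →
      (∀ x : A, jac D.br a b x = 0) → True := fun _ _ _ _ _ => trivial
  have h3 : ∀ s ∈ Sgen, ∀ t ∈ Sgen, ∀ c : A, jac D.br s t c = 0 := by
    intro s hs t ht c
    have hc : c ∈ Algebra.adjoin k Sgen := hgen ▸ trivial
    induction hc using Algebra.adjoin_induction with
    | mem u hu => exact h s hs t ht u hu
    | algebraMap r => exact halg₃ s t r
    | add x y hx hy ihx ihy => rw [jac_add₃, ihx, ihy, add_zero]
    | mul x y hx hy ihx ihy =>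
        rw [hder3, ihx, ihy, S3.act_zero, S3.act_zero, add_zero]
  -- Step 2: kill the second argument
  have h2 : ∀ s ∈ Sgen, ∀ b c : A, jac D.br s b c = 0 := by
    intro s hs b
    have hb : b ∈ Algebra.adjoin k Sgen := hgen ▸ trivial
    induction hb using Algebra.adjoin_induction with
    | mem t ht => exact h3 s hs t ht
    | algebraMap r =>
        intro c
        rw [Algebra.algebraMap_eq_smul_one, jac_smul₂, hone₂, smul_zero]
    | add x y hx hy ihx ihy => intro c; rw [jac_add₂, ihx, ihy, add_zero]
    | mul x y hx hy ihx ihy =>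
        intro c
        rw [der₂, ihx, ihy, map_zero, S3.act_zero, S3.act_zero, map_zero, add_zero]
  -- Step 3: kill the first argument
  intro a b c
  have ha : a ∈ Algebra.adjoin k Sgen := hgen ▸ trivial
  induction ha using Algebra.adjoin_induction with
  | mem s hs => exact h2 s hs b c
  | algebraMap r =>
      rw [Algebra.algebraMap_eq_smul_one, jac_smul₁, hone₁, smul_zero]
  | add x y hx hy ihx ihy => rw [jac_add₁, ihx, ihy, add_zero]
  | mul x y hx hy ihx ihy =>
      rw [der₁, ihx, ihy, map_zero, map_zero, S3.act_zero, S3.act_zero,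
        map_zero, map_zero, add_zero]
end

section
/- Let ⟪-,-⟫₁ be a double Poisson bracket on A associated with a swap-commuting A-bimodule structure · on A⊗A. Then ⟪a,b⟫₂ := ⟪a,b⟫₁° defines a double Poisson bracket on A associated with the swap bimodule structure * of ·. Along the way, the double Jacobiators are related by ⟪a,b,c⟫₂ = -τ_{(12)}⟪a,c,b⟫₁ for all a,b,c ∈ A. -/
open scoped TensorProduct

section Aux

variable {k A : Type*} [CommSemiring k] [Ring A] [Algebra k A]

lemma swapT_tmul (x y : A) : swapT k A (x ⊗ₜ[k] y) = y ⊗ₜ[k] x := rfl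

lemma swapT_swapT (d : A ⊗[k] A) : swapT k A (swapT k A d) = d := by
  induction d using TensorProduct.induction_on with
  | zero => simp
  | tmul x y => rfl
  | add x y hx hy => simp [map_add, hx, hy]

lemma tau12_apply (u : A ⊗[k] A) (z : A) :
    tau12 k A (u ⊗ₜ[k] z) = swapT k A u ⊗ₜ[k] z := by
  simp [tau12, swapT]

lemma tau123_tmul_s5 (x y z : A) :
    tau123 k A ((x ⊗ₜ[k] y) ⊗ₜ[k] z) = (z ⊗ₜ[k] x) ⊗ₜ[k] y := by
  simp [tau123]

lemma tau132_tmul_s5 (x y z : A) :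
    tau132 k A ((x ⊗ₜ[k] y) ⊗ₜ[k] z) = (y ⊗ₜ[k] z) ⊗ₜ[k] x := by
  simp [tau132]

lemma tau123_tau12 (t : (A ⊗[k] A) ⊗[k] A) :
    tau123 k A (tau12 k A t) = tau12 k A (tau132 k A t) := by
  induction t using TensorProduct.induction_on with
  | zero => simp
  | tmul u z =>
    induction u using TensorProduct.induction_on with
    | zero => simp
    | tmul x y =>
      rw [tau12_apply, swapT_tmul, tau123_tmul_s5, tau132_tmul_s5, tau12_apply, swapT_tmul]
    | add p q hp hq =>
      simp only [TensorProduct.add_tmul, map_add] at hp hq ⊢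
      rw [hp, hq]
  | add p q hp hq => simp [map_add, hp, hq]

lemma tau132_tau12 (t : (A ⊗[k] A) ⊗[k] A) :
    tau132 k A (tau12 k A t) = tau12 k A (tau123 k A t) := by
  induction t using TensorProduct.induction_on with
  | zero => simp
  | tmul u z =>
    induction u using TensorProduct.induction_on with
    | zero => simp
    | tmul x y =>
      rw [tau12_apply, swapT_tmul, tau132_tmul_s5, tau123_tmul_s5, tau12_apply, swapT_tmul]
    | add p q hp hq =>
      simp only [TensorProduct.add_tmul, map_add] at hp hq ⊢
      rw [hp, hq]
  | add p q hp hq => simp [map_add, hp, hq]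

lemma trL_swap_comp (f : A →ₗ[k] A ⊗[k] A) (d : A ⊗[k] A) :
    TensorProduct.map ((swapT k A) ∘ₗ f) LinearMap.id d
      = tau12 k A (TensorProduct.map f LinearMap.id d) := by
  induction d using TensorProduct.induction_on with
  | zero => simp
  | tmul x y => simp [tau12_apply]
  | add p q hp hq => simp [map_add, hp, hq]

/-- The swap bimodule structure, packaged as a `BimodStr`. -/
noncomputable def swapStr (S : BimodStr k A) : BimodStr k A where
  act := S.star
  add_left a a' d b := by simp [BimodOn.star, S.add_left, map_add]
  add_mid a d d' b := by simp [BimodOn.star, S.add_mid, map_add]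
  add_right a d b b' := by simp [BimodOn.star, S.add_right, map_add]
  smul_left c a d b := by simp [BimodOn.star, S.smul_left, map_smul]
  smul_mid c a d b := by simp [BimodOn.star, S.smul_mid, map_smul]
  smul_right c a d b := by simp [BimodOn.star, S.smul_right, map_smul]
  act_one_one d := by simp [BimodOn.star, S.act_one_one, swapT_swapT]
  act_mul a a' d b b' := by simp [BimodOn.star, swapT_swapT, S.act_mul]

lemma swapStr_act (S : BimodStr k A) (a : A) (d : A ⊗[k] A) (b : A) :
    (swapStr S).act a d b = S.star a d b := rfl

lemma swapStr_star (S : BimodStr k A) (a : A) (d : A ⊗[k] A) (b : A) :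
    (swapStr S).star a d b = S.act a d b := by
  show swapT k A (S.star a (swapT k A d) b) = S.act a d b
  simp [BimodOn.star, swapT_swapT]

lemma swapStr_swapComm (S : BimodStr k A) (hS : S.SwapCommuting) :
    (swapStr S).SwapCommuting := by
  intro a₁ a₂ b₁ b₂ d
  rw [swapStr_star, swapStr_act, swapStr_star, swapStr_act]
  exact (hS a₂ a₁ b₂ b₁ d).symm

variable {S : BimodStr k A}

lemma swapT_br (D₁ : DoubleBracket S) (a b : A) :
    swapT k A (D₁.br a b) = - D₁.br b a := by
  rw [D₁.antisymm a b, map_neg, swapT_swapT]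

/-- The swapped double bracket, as a double bracket for the swap structure. -/
noncomputable def swapBr (D₁ : DoubleBracket S) : DoubleBracket (swapStr S) where
  br :=
    { toFun := fun a => (swapT k A) ∘ₗ (D₁.br a)
      map_add' := fun a a' => by ext b; simp
      map_smul' := fun c a => by ext b; simp }
  antisymm a b := by
    simp only [LinearMap.coe_mk, AddHom.coe_mk, LinearMap.comp_apply]
    rw [swapT_swapT]
    exact swapT_br D₁ a b
  leibniz_right a b c := by
    simp only [LinearMap.coe_mk, AddHom.coe_mk, LinearMap.comp_apply]
    rw [D₁.leibniz_right a b c, map_add, swapStr_act, swapStr_act]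
    simp [BimodOn.star, swapT_swapT]
  leibniz_left a b c := by
    simp only [LinearMap.coe_mk, AddHom.coe_mk, LinearMap.comp_apply]
    rw [D₁.leibniz_left a b c, map_add, swapStr_star, swapStr_star]
    simp [BimodOn.star, swapT_swapT]

lemma jac_swapBr (D₁ : DoubleBracket S) (a b c : A) :
    jac (swapBr D₁).br a b c = - tau12 k A (jac D₁.br a c b) := by
  have hbr : ∀ (e : A) (d : A ⊗[k] A),
      trL (swapBr D₁).br e d = tau12 k A (trL D₁.br e d) :=
    fun e d => trL_swap_comp (D₁.br e) d
  have hD₂ : ∀ x y : A, (swapBr D₁).br x y = swapT k A (D₁.br x y) := fun _ _ => rfl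
  simp only [jac, hD₂, swapT_br, map_neg, map_add, hbr, tau123_tau12, tau132_tau12]
  abel

end Aux

/-- Proposition `Op-Equiv`: if `⟪-,-⟫₁` is a double Poisson bracket
associated with a swap-commuting bimodule structure `·`, then `⟪-,-⟫₂ = ° ∘ ⟪-,-⟫₁` is a
double Poisson bracket associated with the swap bimodule structure `*` of `·`, and the
double Jacobiators are related by `⟪a,b,c⟫₂ = -τ_{(12)} ⟪a,c,b⟫₁`. -/
theorem swap_of_double_poisson_is_double_poisson
    {k A : Type*} [Field k] [CharZero k] [Ring A] [Algebra k A]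
    (S : BimodStr k A) (hS : S.SwapCommuting) (D₁ : DoubleBracket S)
    (hP : ∀ a b c : A, jac D₁.br a b c = 0) :
    ∃ S₂ : BimodStr k A,
      (∀ (a b : A) (d : A ⊗[k] A), S₂.act a d b = S.star a d b) ∧
      S₂.SwapCommuting ∧
      ∃ D₂ : DoubleBracket S₂,
        (∀ a b : A, D₂.br a b = swapT k A (D₁.br a b)) ∧
        (∀ a b c : A, jac D₂.br a b c = - tau12 k A (jac D₁.br a c b)) ∧
        (∀ a b c : A, jac D₂.br a b c = 0) := by
  exact ⟨swapStr S, fun _ _ _ => rfl, swapStr_swapComm S hS, swapBr D₁, fun _ _ => rfl,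
    jac_swapBr D₁, fun a b c => by rw [jac_swapBr, hP, map_zero, neg_zero]⟩
end

section
/- Let α be a k-algebra automorphism of A and ⟪-,-⟫ a double bracket on A associated with the α-twisted outer bimodule structure (a·d·b = α(a)d'⊗d''α(b)). Define {a,b}_m := ⟪a,b⟫'⟪a,b⟫''. Then {ab - ba, c}_m = 0 for all a,b,c ∈ A, so {-,-}_m descends to a map A/[A,A] × A → A, which is an α-twisted derivation in its second argument ({ā,bc}_m = α(b){ā,c}_m + {ā,b}_m α(c)); moreover {ā, bc - cb}_m ∈ [A,A], so {-,-}_m descends further to an antisymmetric map A/[A,A] × A/[A,A] → A/[A,A]. -/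
open scoped TensorProduct

/-- The `k`-span of commutators `[A,A]` in `A`. -/
def commSpan (k A : Type*) [CommSemiring k] [Ring A] [Algebra k A] : Submodule k A :=
  Submodule.span k {x : A | ∃ a b : A, x = a * b - b * a}

/-- The multiplication map `m ∘ ⟪-,-⟫ : A × A → A`, `{a,b}_m = ⟪a,b⟫'⟪a,b⟫''`. -/
noncomputable def brm {k A : Type*} [CommSemiring k] [Ring A] [Algebra k A]
    (br : A →ₗ[k] A →ₗ[k] A ⊗[k] A) (a b : A) : A :=
  LinearMap.mul' k A (br a b)


section Aux
variable {k A : Type*} [CommSemiring k] [Ring A] [Algebra k A]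

lemma mul'_act (α : A ≃ₐ[k] A) (S : BimodStr k A)
    (hS : ∀ (a b : A) (d : A ⊗[k] A),
      S.act a d b = ((α a) ⊗ₜ[k] (1 : A)) * d * ((1 : A) ⊗ₜ[k] (α b)))
    (a b : A) (d : A ⊗[k] A) :
    LinearMap.mul' k A (S.act a d b) = α a * LinearMap.mul' k A d * α b := by
  rw [hS]
  induction d using TensorProduct.induction_on with
  | zero => simp
  | tmul x y =>
      simp [Algebra.TensorProduct.tmul_mul_tmul, LinearMap.mul'_apply, mul_assoc]
  | add x y hx hy =>
      simp only [mul_add, add_mul, map_add, hx, hy]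

lemma mul'_star (α : A ≃ₐ[k] A) (S : BimodStr k A)
    (hS : ∀ (a b : A) (d : A ⊗[k] A),
      S.act a d b = ((α a) ⊗ₜ[k] (1 : A)) * d * ((1 : A) ⊗ₜ[k] (α b)))
    (a b : A) (d : A ⊗[k] A) :
    LinearMap.mul' k A (S.star a d b) =
      LinearMap.mul' k A (TensorProduct.map LinearMap.id (LinearMap.mulLeft k (α b) ∘ₗ LinearMap.mulLeft k (α a)) d) := by
  unfold BimodOn.star
  rw [hS]
  induction d using TensorProduct.induction_on with
  | zero => simp
  | tmul x y =>
      simp [swapT, Algebra.TensorProduct.tmul_mul_tmul, LinearMap.mul'_apply, mul_assoc]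
  | add x y hx hy =>
      simp only [mul_add, add_mul, map_add, hx, hy]

lemma mul'_sub_swap_mem (d : A ⊗[k] A) :
    LinearMap.mul' k A d - LinearMap.mul' k A (swapT k A d) ∈ commSpan k A := by
  induction d using TensorProduct.induction_on with
  | zero => simp [commSpan]
  | tmul x y =>
      simp only [swapT, LinearEquiv.coe_coe, TensorProduct.comm_tmul, LinearMap.mul'_apply]
      exact Submodule.subset_span ⟨x, y, rfl⟩
  | add x y hx hy =>
      have : LinearMap.mul' k A (x + y) - LinearMap.mul' k A (swapT k A (x + y)) =
          (LinearMap.mul' k A x - LinearMap.mul' k A (swapT k A x)) +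
          (LinearMap.mul' k A y - LinearMap.mul' k A (swapT k A y)) := by
        simp only [map_add]; abel
      rw [this]; exact Submodule.add_mem _ hx hy

end Aux

/-- Lemmas `Out-Ind-der` and `Out-Ind-2`: for a double bracket
associated with the `α`-twisted outer bimodule structure, `{ab - ba, c}_m = 0`, the
induced map is an `α`-twisted derivation in its second argument, `{a, bc - cb}_m ∈ [A,A]`,
and the operation is antisymmetric modulo `[A,A]`. -/
theorem twisted_outer_mult_bracket_descends
    {k A : Type*} [Field k] [CharZero k] [Ring A] [Algebra k A]
    (α : A ≃ₐ[k] A)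
    (S : BimodStr k A)
    (hS : ∀ (a b : A) (d : A ⊗[k] A),
      S.act a d b = ((α a) ⊗ₜ[k] (1 : A)) * d * ((1 : A) ⊗ₜ[k] (α b)))
    (D : DoubleBracket S) :
    (∀ a b c : A, brm D.br (a * b - b * a) c = 0) ∧
    (∀ a b c : A, brm D.br a (b * c) = α b * brm D.br a c + brm D.br a b * α c) ∧
    (∀ a b c : A, brm D.br a (b * c - c * b) ∈ commSpan k A) ∧
    (∀ a b : A, brm D.br a b + brm D.br b a ∈ commSpan k A) := by
  have hstar : ∀ (a b : A) (d : A ⊗[k] A),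
      LinearMap.mul' k A (S.star a d b) =
      LinearMap.mul' k A (TensorProduct.map LinearMap.id
        (LinearMap.mulLeft k (α b) ∘ₗ LinearMap.mulLeft k (α a)) d) :=
    mul'_star α S hS
  have hder : ∀ a b c : A,
      brm D.br a (b * c) = α b * brm D.br a c + brm D.br a b * α c := by
    intro a b c
    unfold brm
    rw [D.leibniz_right a b c, map_add, mul'_act α S hS, mul'_act α S hS]
    simp
  refine ⟨?_, hder, ?_, ?_⟩
  · intro a b c
    have key : ∀ x y : A, brm D.br (x * y) c =
        LinearMap.mul' k A (TensorProduct.map LinearMap.id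
          (LinearMap.mulLeft k (α 1) ∘ₗ LinearMap.mulLeft k (α x)) (D.br y c)) +
        LinearMap.mul' k A (TensorProduct.map LinearMap.id
          (LinearMap.mulLeft k (α y) ∘ₗ LinearMap.mulLeft k (α 1)) (D.br x c)) := by
      intro x y
      unfold brm
      rw [D.leibniz_left c x y, map_add, hstar, hstar]
    have swapxy : ∀ x y : A, brm D.br (x * y) c = brm D.br (y * x) c := by
      intro x y
      rw [key x y, key y x, add_comm]
      congr 2 <;> simp
    have : brm D.br (a * b - b * a) c = brm D.br (a * b) c - brm D.br (b * a) c := by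
      unfold brm; simp
    rw [this, swapxy a b, sub_self]
  · intro a b c
    have : brm D.br a (b * c - c * b) = brm D.br a (b * c) - brm D.br a (c * b) := by
      unfold brm; simp
    rw [this, hder, hder]
    have : α b * brm D.br a c + brm D.br a b * α c -
        (α c * brm D.br a b + brm D.br a c * α b) =
        (α b * brm D.br a c - brm D.br a c * α b) +
        (brm D.br a b * α c - α c * brm D.br a b) := by abel
    rw [this]
    exact Submodule.add_mem _ (Submodule.subset_span ⟨_, _, rfl⟩)
      (Submodule.subset_span ⟨_, _, rfl⟩)
  · intro a b
    have h : brm D.br a b + brm D.br b a =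
        LinearMap.mul' k A (D.br b a) - LinearMap.mul' k A (swapT k A (D.br b a)) := by
      unfold brm
      rw [D.antisymm a b]
      simp only [map_neg, add_comm, sub_eq_add_neg]
    rw [h]
    exact mul'_sub_swap_mem _
end
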